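/- arXiv:1404.5398 — 4 statements merged into one kernel-verified Lean document; each statement's English description precedes it below -/
import Mathlib

section
/- Let Y1, Y2 be independent discrete real-valued random variables, and let X1, X2 be (possibly dependent) discrete real-valued random variables such that X1 ≤_st Y1 and, conditioned on any realization X1 = x, the conditional distribution of X2 is stochastically dominated by Y2. Then X1 + X2 ≤_st Y1 + Y2. -/
/-!
Write `P`, `Q`, `R` for the laws of `X₁`, `Y₁`, `Y₂`. Splitting the event `t < X₁ + X₂` along the
countably many values `x` of `X₁`, the conditional hypothesis bounds its probability by
`∫ R (t - x, ∞) dP(x) = (P ∗ R) (t, ∞)`. By Tonelli, `(P ∗ R) (t, ∞) = ∫ P (t - z, ∞) dR(z)`, which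
is monotone in `P` for the stochastic order, so it is at most `(Q ∗ R) (t, ∞)`; by independence
`Q ∗ R` is the law of `Y₁ + Y₂`.
-/

open MeasureTheory ProbabilityTheory Set
open scoped ENNReal

namespace MeasureTheory.Measure

theorem conv_apply {M : Type*} [AddMonoid M] [MeasurableSpace M] [MeasurableAdd₂ M]
    (P R : Measure M) [SFinite R] {s : Set M} (hs : MeasurableSet s) :
    (P ∗ R) s = ∫⁻ x, R ((x + ·) ⁻¹' s) ∂P := by
  rw [conv, map_apply measurable_add hs, prod_apply (measurable_add hs)]
  rfl

theorem conv_Ioi_le_conv_Ioi {P Q : Measure ℝ} [SFinite P] [SFinite Q] (R : Measure ℝ)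
    [SFinite R] (h : ∀ t, P (Ioi t) ≤ Q (Ioi t)) (t : ℝ) :
    (P ∗ R) (Ioi t) ≤ (Q ∗ R) (Ioi t) := by
  have hshift : ∀ z : ℝ, (z + ·) ⁻¹' Ioi t = Ioi (t - z) := fun z ↦ by
    ext x
    simp [sub_lt_iff_lt_add']
  rw [conv_comm P, conv_comm Q, conv_apply _ _ measurableSet_Ioi,
    conv_apply _ _ measurableSet_Ioi]
  exact lintegral_mono fun z ↦ by simpa only [hshift] using h (t - z)

end MeasureTheory.Measure

theorem measure_le_lintegral_map_of_countable_range {Ω α : Type*} [MeasurableSpace Ω]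
    [MeasurableSpace α] [MeasurableSingletonClass α] {μ : Measure Ω} {X : Ω → α}
    (hX : Measurable X) (hdX : (range X).Countable) (A : Set Ω) (g : α → ℝ≥0∞)
    (h : ∀ x, μ (X ⁻¹' {x}) ≠ 0 → μ (A ∩ X ⁻¹' {x}) ≤ g x * μ (X ⁻¹' {x})) :
    μ A ≤ ∫⁻ x, g x ∂μ.map X := by
  have hfiber : ∀ x, μ (A ∩ X ⁻¹' {x}) ≤ g x * μ.map X {x} := fun x ↦ by
    rw [Measure.map_apply hX (measurableSet_singleton x)]
    by_cases hx : μ (X ⁻¹' {x}) = 0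
    · rw [measure_mono_null inter_subset_right hx]
      exact zero_le
    · exact h x hx
  calc μ A = ∑' x : range X, μ (A ∩ X ⁻¹' {↑x}) := by
        rw [← Measure.restrict_apply_univ, ← preimage_range X,
          ← tsum_measure_preimage_singleton hdX fun x _ ↦ hX (measurableSet_singleton x)]
        simp only [Measure.restrict_apply (hX (measurableSet_singleton _)), inter_comm]
    _ ≤ ∑' x : range X, g x * μ.map X {↑x} := ENNReal.tsum_le_tsum fun x ↦ hfiber x
    _ = ∫⁻ x in range X, g x ∂μ.map X := (lintegral_countable _ hdX).symm
    _ ≤ ∫⁻ x, g x ∂μ.map X := setLIntegral_le_lintegral _ _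

theorem stmt_1_general {Ω₁ Ω₂ : Type*} [MeasurableSpace Ω₁] [MeasurableSpace Ω₂]
    (μ : Measure Ω₁) (ν : Measure Ω₂) [IsProbabilityMeasure μ] [IsProbabilityMeasure ν]
    (X₁ X₂ : Ω₁ → ℝ) (Y₁ Y₂ : Ω₂ → ℝ)
    (hX₁ : Measurable X₁) (hY₁ : Measurable Y₁) (hY₂ : Measurable Y₂)
    (hdX₁ : (Set.range X₁).Countable)
    (hindep : IndepFun Y₁ Y₂ ν)
    (h₁ : ∀ t : ℝ, μ {ω | t < X₁ ω} ≤ ν {ω | t < Y₁ ω})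
    (h₂ : ∀ x : ℝ, μ {ω | X₁ ω = x} ≠ 0 → ∀ t : ℝ,
      μ ({ω | t < X₂ ω} ∩ {ω | X₁ ω = x}) ≤ ν {ω | t < Y₂ ω} * μ {ω | X₁ ω = x}) :
    ∀ t : ℝ, μ {ω | t < X₁ ω + X₂ ω} ≤ ν {ω | t < Y₁ ω + Y₂ ω} := by
  intro t
  have hdom : ∀ s, μ.map X₁ (Ioi s) ≤ ν.map Y₁ (Ioi s) := fun s ↦ by
    rw [Measure.map_apply hX₁ measurableSet_Ioi, Measure.map_apply hY₁ measurableSet_Ioi]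
    exact h₁ s
  have hcond : ∀ x, μ (X₁ ⁻¹' {x}) ≠ 0 → μ ({ω | t < X₁ ω + X₂ ω} ∩ X₁ ⁻¹' {x}) ≤
      ν.map Y₂ ((x + ·) ⁻¹' Ioi t) * μ (X₁ ⁻¹' {x}) := fun x hx ↦ by
    have hfiber : {ω | t < X₁ ω + X₂ ω} ∩ X₁ ⁻¹' {x} = {ω | t < x + X₂ ω} ∩ {ω | X₁ ω = x} := by
      ext ω
      simp +contextual
    have h₂x := h₂ x hx (t - x)
    simp only [sub_lt_iff_lt_add'] at h₂x
    rw [hfiber, Measure.map_apply hY₂ (measurable_const_add x measurableSet_Ioi)]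
    exact h₂x
  calc μ {ω | t < X₁ ω + X₂ ω}
      ≤ ∫⁻ x, ν.map Y₂ ((x + ·) ⁻¹' Ioi t) ∂μ.map X₁ :=
        measure_le_lintegral_map_of_countable_range hX₁ hdX₁ _ _ hcond
    _ = (μ.map X₁ ∗ ν.map Y₂) (Ioi t) := (Measure.conv_apply _ _ measurableSet_Ioi).symm
    _ ≤ (ν.map Y₁ ∗ ν.map Y₂) (Ioi t) := Measure.conv_Ioi_le_conv_Ioi _ hdom t
    _ = ν {ω | t < Y₁ ω + Y₂ ω} := by
        rw [← hindep.map_add_eq_map_conv_map hY₁ hY₂,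
          Measure.map_apply (hY₁.add hY₂) measurableSet_Ioi]
        rfl

/-- Let `Y₁, Y₂` be independent discrete real random variables (on a probability space
`(Ω₂, ν)`) and `X₁, X₂` possibly dependent discrete real random variables (on `(Ω₁, μ)`)
such that `X₁ ≤_st Y₁` and, conditioned on any realization `X₁ = x` of positive
probability, `X₂` is stochastically dominated by `Y₂`
(`Pr[X₂ > t ∧ X₁ = x] ≤ Pr[Y₂ > t]·Pr[X₁ = x]`).  Then `X₁ + X₂ ≤_st Y₁ + Y₂`. -/
theorem stmt_1 {Ω₁ Ω₂ : Type*} [MeasurableSpace Ω₁] [MeasurableSpace Ω₂]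
    (μ : Measure Ω₁) (ν : Measure Ω₂) [IsProbabilityMeasure μ] [IsProbabilityMeasure ν]
    (X₁ X₂ : Ω₁ → ℝ) (Y₁ Y₂ : Ω₂ → ℝ)
    (hX₁ : Measurable X₁) (hX₂ : Measurable X₂) (hY₁ : Measurable Y₁) (hY₂ : Measurable Y₂)
    (hdX₁ : (Set.range X₁).Countable) (hdX₂ : (Set.range X₂).Countable)
    (hdY₁ : (Set.range Y₁).Countable) (hdY₂ : (Set.range Y₂).Countable)
    (hindep : IndepFun Y₁ Y₂ ν)
    (h₁ : ∀ t : ℝ, μ {ω | t < X₁ ω} ≤ ν {ω | t < Y₁ ω})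
    (h₂ : ∀ x : ℝ, μ {ω | X₁ ω = x} ≠ 0 → ∀ t : ℝ,
      μ ({ω | t < X₂ ω} ∩ {ω | X₁ ω = x}) ≤ ν {ω | t < Y₂ ω} * μ {ω | X₁ ω = x}) :
    ∀ t : ℝ, μ {ω | t < X₁ ω + X₂ ω} ≤ ν {ω | t < Y₁ ω + Y₂ ω} :=
  stmt_1_general μ ν X₁ X₂ Y₁ Y₂ hX₁ hY₁ hY₂ hdX₁ hindep h₁ h₂
end

section
/- Let 2d < α ≤ n be positive integers. Then (1 - 2d/n²)^{⌈n²/α⌉} < 1 - d/α. -/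
/-- For positive integers `2d < α ≤ n`, `(1 - 2d/n²)^{⌈n²/α⌉} < 1 - d/α`. -/
theorem stmt_5 (n d α : ℕ) (hd : 0 < d) (hdα : 2 * d < α) (hαn : α ≤ n) :
    (1 - 2 * (d : ℝ) / (n : ℝ) ^ 2) ^ (⌈((n : ℝ) ^ 2) / (α : ℝ)⌉₊) < 1 - (d : ℝ) / (α : ℝ) := by
  have hd' : (0:ℝ) < d := by exact_mod_cast hd
  have hdα' : 2 * (d:ℝ) < α := by exact_mod_cast hdα
  have hαn' : (α:ℝ) ≤ n := by exact_mod_cast hαn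
  have hA : (0:ℝ) < α := by linarith
  have hN : (0:ℝ) < n := by linarith
  have hN1 : (1:ℝ) ≤ n := by
    have : (1:ℕ) ≤ n := by omega
    exact_mod_cast this
  have hNN : (n:ℝ) ≤ (n:ℝ)^2 := by nlinarith
  set x : ℝ := 2 * (d:ℝ) / (n:ℝ)^2 with hxdef
  have hx0 : 0 < x := by positivity
  have hx1 : x < 1 := by
    rw [hxdef, div_lt_one (by positivity)]
    nlinarith
  set k := ⌈((n : ℝ) ^ 2) / (α : ℝ)⌉₊ with hkdef
  have hk : ((n:ℝ)^2) / α ≤ (k:ℝ) := Nat.le_ceil _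
  have key1 : (1 + (k:ℝ) * x) * (1 - x)^k ≤ 1 := by
    calc (1 + (k:ℝ) * x) * (1 - x)^k
        ≤ (1 + x)^k * (1 - x)^k := by
          apply mul_le_mul_of_nonneg_right (one_add_mul_le_pow (by linarith) k)
          exact pow_nonneg (by linarith) k
      _ = (1 - x^2)^k := by rw [← mul_pow]; ring_nf
      _ ≤ 1 := pow_le_one₀ (by nlinarith) (by nlinarith)
  have hkx : 2 * (d:ℝ) / α ≤ (k:ℝ) * x := by
    have h1 : ((n:ℝ)^2 / α) * x = 2 * (d:ℝ) / α := by
      rw [hxdef]; field_simp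
    have h2 : ((n:ℝ)^2 / α) * x ≤ (k:ℝ) * x :=
      mul_le_mul_of_nonneg_right hk hx0.le
    linarith
  have hpos : 0 < 1 + (k:ℝ) * x := by positivity
  have h1 : 1 < (1 + (k:ℝ) * x) * (1 - (d:ℝ)/α) := by
    have hda : (d:ℝ)/α < 1/2 := by rw [div_lt_iff₀ hA]; linarith
    have hq : (1 + 2*(d:ℝ)/α) * (1 - (d:ℝ)/α) > 1 := by
      have e : (1 + 2*(d:ℝ)/α) * (1 - (d:ℝ)/α) - 1 = (d:ℝ) * (α - 2*d) / α^2 := by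
        field_simp; ring
      have hp : 0 < (d:ℝ) * (α - 2*d) / α^2 := by
        apply div_pos (by nlinarith) (by positivity)
      linarith
    nlinarith [hkx, hda]
  have key2 : (1 + (k:ℝ) * x) * (1 - x)^k < (1 + (k:ℝ) * x) * (1 - (d:ℝ)/α) :=
    lt_of_le_of_lt key1 h1
  exact lt_of_mul_lt_mul_left key2 hpos.le
end

section
/- Let d ≤ α ≤ n be positive integers, X ~ Binomial(α, d/α) and Z = 2d + Binomial(n², 2d/n²). Then X is stochastically dominated by Z. -/
open Finset

/-- The probability mass function of the binomial distribution with `m` trials and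
success probability `p`. -/
noncomputable def binomPMF (m : ℕ) (p : ℝ) (i : ℕ) : ℝ :=
  (m.choose i : ℝ) * p ^ i * (1 - p) ^ (m - i)

noncomputable def tailB (N : ℕ) (p : ℝ) (s : ℕ) : ℝ :=
  ∑ i ∈ Finset.Icc s N, binomPMF N p i

lemma binomPMF_nonneg {p : ℝ} (h0 : 0 ≤ p) (h1 : p ≤ 1) (m i : ℕ) :
    0 ≤ binomPMF m p i := by
  unfold binomPMF
  have : (0:ℝ) ≤ 1 - p := by linarith
  positivity

lemma binomPMF_sum (m : ℕ) (p : ℝ) :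
    ∑ i ∈ range (m + 1), binomPMF m p i = 1 := by
  have h := add_pow p (1 - p) m
  have h1 : p + (1 - p) = 1 := by ring
  rw [h1, one_pow] at h
  calc ∑ i ∈ range (m + 1), binomPMF m p i
      = ∑ i ∈ range (m + 1), p ^ i * (1 - p) ^ (m - i) * (m.choose i : ℝ) := by
        apply Finset.sum_congr rfl; intro i _; unfold binomPMF; ring
    _ = 1 := h.symm

lemma tailB_zero (m : ℕ) (p : ℝ) : tailB m p 0 = 1 := by
  unfold tailB
  rw [show Finset.Icc 0 m = range (m + 1) by ext x; simp [Nat.lt_succ_iff]]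
  exact binomPMF_sum m p

lemma tailB_empty {m s : ℕ} (h : m < s) (p : ℝ) : tailB m p s = 0 := by
  unfold tailB
  rw [Finset.Icc_eq_empty (by omega)]
  simp

lemma binomPMF_choose_zero {m i : ℕ} (h : m < i) (p : ℝ) : binomPMF m p i = 0 := by
  unfold binomPMF
  rw [Nat.choose_eq_zero_of_lt h]
  simp

lemma binomPMF_succ (N : ℕ) (p : ℝ) (i : ℕ) :
    binomPMF (N + 1) p (i + 1) = p * binomPMF N p i + (1 - p) * binomPMF N p (i + 1) := by
  rcases lt_trichotomy i N with h | h | h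
  · unfold binomPMF
    rw [Nat.choose_succ_succ]
    simp only [Nat.succ_eq_add_one]
    have e1 : N + 1 - (i + 1) = N - i := by omega
    have e2 : N - i = (N - (i + 1)) + 1 := by omega
    rw [e1, e2, pow_succ, pow_succ]
    push_cast
    ring
  · subst h
    unfold binomPMF
    rw [Nat.choose_self, Nat.choose_self, Nat.choose_succ_self]
    simp
    ring
  · rw [binomPMF_choose_zero (by omega), binomPMF_choose_zero (by omega),
      binomPMF_choose_zero (by omega)]
    ring

lemma tailB_succ (N : ℕ) (p : ℝ) (s : ℕ) :
    tailB (N + 1) p (s + 1) = p * tailB N p s + (1 - p) * tailB N p (s + 1) := by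
  by_cases hs : s ≤ N
  · unfold tailB
    have him : Finset.Icc (s + 1) (N + 1) = Finset.image (· + 1) (Finset.Icc s N) := by
      ext x
      simp only [Finset.mem_Icc, Finset.mem_image]
      constructor
      · intro hx; exact ⟨x - 1, by omega, by omega⟩
      · rintro ⟨a, ha, rfl⟩; omega
    have hinj : ∀ a ∈ Finset.Icc s N, ∀ b ∈ Finset.Icc s N, a + 1 = b + 1 → a = b := by
      intro a _ b _ hab; omega
    have hre : ∀ M : ℕ, ∑ i ∈ Finset.Icc (s + 1) (N + 1), binomPMF M p i
        = ∑ i ∈ Finset.Icc s N, binomPMF M p (i + 1) := by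
      intro M; rw [him, Finset.sum_image hinj]
    rw [hre]
    have hterm : ∀ i ∈ Finset.Icc s N,
        binomPMF (N + 1) p (i + 1) = p * binomPMF N p i + (1 - p) * binomPMF N p (i + 1) :=
      fun i _ => binomPMF_succ N p i
    rw [Finset.sum_congr rfl hterm, Finset.sum_add_distrib, ← Finset.mul_sum, ← Finset.mul_sum]
    congr 1
    rw [← hre]
    congr 1
    rw [Finset.sum_Icc_succ_top (show s + 1 ≤ N + 1 by omega) (binomPMF N p),
      binomPMF_choose_zero (by omega), add_zero]
  · rw [tailB_empty (by omega), tailB_empty (by omega), tailB_empty (by omega)]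
    ring

lemma tailB_nonneg {p : ℝ} (h0 : 0 ≤ p) (h1 : p ≤ 1) (N s : ℕ) : 0 ≤ tailB N p s := by
  unfold tailB
  exact Finset.sum_nonneg fun i _ => binomPMF_nonneg h0 h1 N i

lemma tailB_anti_s {p : ℝ} (h0 : 0 ≤ p) (h1 : p ≤ 1) (N s : ℕ) :
    tailB N p (s + 1) ≤ tailB N p s := by
  unfold tailB
  apply Finset.sum_le_sum_of_subset_of_nonneg
  · apply Finset.Icc_subset_Icc_left; omega
  · intro i _ _; exact binomPMF_nonneg h0 h1 N i

lemma tailB_mono_N {p : ℝ} (h0 : 0 ≤ p) (h1 : p ≤ 1) (N s : ℕ) :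
    tailB N p s ≤ tailB (N + 1) p s := by
  cases s with
  | zero => rw [tailB_zero, tailB_zero]
  | succ s =>
    rw [tailB_succ]
    have h2 := tailB_anti_s h0 h1 N s
    nlinarith [tailB_nonneg h0 h1 N s, tailB_nonneg h0 h1 N (s + 1)]

lemma tailB_mono_N' {p : ℝ} (h0 : 0 ≤ p) (h1 : p ≤ 1) {N M : ℕ} (h : N ≤ M) (s : ℕ) :
    tailB N p s ≤ tailB M p s := by
  induction M with
  | zero => have hN0 : N = 0 := by omega
            subst hN0; exact le_refl _
  | succ M ih =>
    rcases Nat.lt_or_ge N (M + 1) with h' | h'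
    · exact le_trans (ih (by omega)) (tailB_mono_N h0 h1 M s)
    · have : N = M + 1 := by omega
      subst this; exact le_refl _

lemma tailB_shift {p : ℝ} (h0 : 0 ≤ p) (h1 : p ≤ 1) (N s : ℕ) :
    tailB (N + 1) p (s + 1) ≤ tailB N p s := by
  rw [tailB_succ]
  have h2 := tailB_anti_s h0 h1 N s
  nlinarith

lemma tailB_shift' {p : ℝ} (h0 : 0 ≤ p) (h1 : p ≤ 1) (N s c : ℕ) :
    tailB (N + c) p (s + c) ≤ tailB N p s := by
  induction c with
  | zero => exact le_refl _
  | succ c ih =>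
    calc tailB (N + c + 1) p (s + c + 1) ≤ tailB (N + c) p (s + c) := tailB_shift h0 h1 _ _
    _ ≤ tailB N p s := ih

lemma tailB_mono_p {p p' : ℝ} (h0 : 0 ≤ p) (hpp : p ≤ p') (h1 : p' ≤ 1) (N s : ℕ) :
    tailB N p s ≤ tailB N p' s := by
  induction N generalizing s with
  | zero =>
    cases s with
    | zero => rw [tailB_zero, tailB_zero]
    | succ s => rw [tailB_empty (by omega), tailB_empty (by omega)]
  | succ N ih =>
    cases s with
    | zero => rw [tailB_zero, tailB_zero]
    | succ s =>
      rw [tailB_succ, tailB_succ]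
      have hp'0 : 0 ≤ p' := le_trans h0 hpp
      have hp1 : p ≤ 1 := le_trans hpp h1
      have i1 := ih s
      have i2 := ih (s + 1)
      have h2 := tailB_anti_s hp'0 h1 N s
      nlinarith [tailB_nonneg hp'0 h1 N s, tailB_nonneg hp'0 h1 N (s + 1)]

lemma tailB_conv {q : ℝ} (h0 : 0 ≤ q) (h1 : q ≤ 1) (m s : ℕ) : ∀ k : ℕ,
    (1 - (1 - q) ^ k) * tailB m q s + (1 - q) ^ k * tailB m q (s + 1) ≤ tailB (m + k) q (s + 1) := by
  intro k
  induction k with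
  | zero => simp
  | succ k ih =>
    have hrec : tailB (m + k + 1) q (s + 1) = q * tailB (m + k) q s + (1 - q) * tailB (m + k) q (s + 1) :=
      tailB_succ (m + k) q s
    have hN : tailB m q s ≤ tailB (m + k) q s := tailB_mono_N' h0 h1 (by omega) s
    have hq' : (0:ℝ) ≤ 1 - q := by linarith
    have step : q * tailB m q s + (1 - q) * ((1 - (1 - q) ^ k) * tailB m q s + (1 - q) ^ k * tailB m q (s + 1))
        ≤ tailB (m + k + 1) q (s + 1) := by
      rw [hrec]
      have := mul_le_mul_of_nonneg_left hN h0
      have := mul_le_mul_of_nonneg_left ih hq'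
      linarith
    calc (1 - (1 - q) ^ (k + 1)) * tailB m q s + (1 - q) ^ (k + 1) * tailB m q (s + 1)
        = q * tailB m q s + (1 - q) * ((1 - (1 - q) ^ k) * tailB m q s + (1 - q) ^ k * tailB m q (s + 1)) := by
          rw [pow_succ]; ring
      _ ≤ tailB (m + k + 1) q (s + 1) := step
      _ = tailB (m + (k + 1)) q (s + 1) := by rw [Nat.add_assoc]

lemma tailB_group {q : ℝ} (h0 : 0 ≤ q) (h1 : q ≤ 1) (k : ℕ) : ∀ β s : ℕ,
    tailB β (1 - (1 - q) ^ k) s ≤ tailB (β * k) q s := by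
  have hq' : (0:ℝ) ≤ 1 - q := by linarith
  have hr0 : (0:ℝ) ≤ 1 - (1 - q) ^ k := by
    have : (1 - q) ^ k ≤ 1 := pow_le_one₀ hq' (by linarith)
    linarith
  have hr1 : 1 - (1 - q) ^ k ≤ 1 := by nlinarith [pow_nonneg hq' k]
  intro β
  induction β with
  | zero =>
    intro s
    cases s with
    | zero => rw [tailB_zero, tailB_zero]
    | succ s => rw [tailB_empty (by omega), tailB_empty (by omega)]
  | succ β ih =>
    intro s
    cases s with
    | zero => rw [tailB_zero, tailB_zero]
    | succ s =>
      rw [tailB_succ]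
      have i1 := ih s
      have i2 := ih (s + 1)
      have conv := tailB_conv h0 h1 (β * k) s k
      have e : (β + 1) * k = β * k + k := by ring
      rw [e]
      have c1 := mul_le_mul_of_nonneg_left i1 hr0
      have c2 := mul_le_mul_of_nonneg_left i2 (by linarith : (0:ℝ) ≤ 1 - (1 - (1 - q) ^ k))
      linarith

lemma pow_quad {q : ℝ} (h0 : 0 ≤ q) (h1 : q ≤ 1) : ∀ k : ℕ,
    (1 - q) ^ k ≤ 1 - (k : ℝ) * q + ((k : ℝ) * q) ^ 2 / 2 := by
  intro k
  induction k with
  | zero => norm_num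
  | succ k ih =>
    have h2 : (0:ℝ) ≤ 1 - q := by linarith
    have h4 : (1 - q) ^ k * (1 - q) ≤ (1 - (k : ℝ) * q + ((k : ℝ) * q) ^ 2 / 2) * (1 - q) :=
      mul_le_mul_of_nonneg_right ih h2
    rw [pow_succ]
    push_cast
    nlinarith [sq_nonneg ((k:ℝ) * q), sq_nonneg q,
      mul_nonneg (mul_nonneg (mul_nonneg (Nat.cast_nonneg k : (0:ℝ) ≤ k) (Nat.cast_nonneg k : (0:ℝ) ≤ k)) h0) (mul_nonneg h0 h0)]

lemma caseA (D B N2 X : ℝ) (hD1 : 1 ≤ D) (hB1 : 1 ≤ B)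
    (hBN2 : B ≤ N2) (hABN2 : (B + 2 * D) * B ≤ N2)
    (hf1 : 2 * D * N2 - 2 * D * B ≤ B * N2 * X) (hX0 : 0 ≤ X) (hXle : X ≤ 1) :
    D / (B + 2 * D) ≤ X - X ^ 2 / 2 := by
  have hApos : (0:ℝ) < B + 2 * D := by linarith
  have hN2pos : (0:ℝ) < N2 := by linarith
  have hBN2pos : (0:ℝ) < B * N2 := by nlinarith
  have hc0 : (0:ℝ) ≤ 2 * D * N2 - 2 * D * B := by nlinarith
  have h2x : (0:ℝ) ≤ 2 - X := by linarith
  have h1 : 2 * D * N2 - 2 * D * B ≤ B * N2 * (X * (2 - X)) := by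
    have m1 : (2 * D * N2 - 2 * D * B) * (2 - X) ≤ B * N2 * X * (2 - X) :=
      mul_le_mul_of_nonneg_right hf1 h2x
    nlinarith
  have hinner : (0:ℝ) ≤ 2 * D * N2 - (B + 2 * D) * B := by nlinarith
  have h2 : 2 * D * (B * N2) ≤ (B + 2 * D) * (2 * D * N2 - 2 * D * B) := by
    nlinarith [mul_nonneg (by linarith : (0:ℝ) ≤ 2 * D) hinner]
  have h3 : 2 * D * (B * N2) ≤ (B + 2 * D) * (B * N2 * (X * (2 - X))) :=
    le_trans h2 (mul_le_mul_of_nonneg_left h1 (le_of_lt hApos))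
  have h4 : 2 * D ≤ (B + 2 * D) * (X * (2 - X)) := by
    have e1 : B * N2 * (2 * D) = 2 * D * (B * N2) := by ring
    have e2 : B * N2 * ((B + 2 * D) * (X * (2 - X))) = (B + 2 * D) * (B * N2 * (X * (2 - X))) := by
      ring
    have h3' : B * N2 * (2 * D) ≤ B * N2 * ((B + 2 * D) * (X * (2 - X))) := by
      rw [e1, e2]; exact h3
    exact le_of_mul_le_mul_left h3' hBN2pos
  rw [div_le_iff₀ hApos]
  nlinarith [h4]

lemma crux_real (D B N2 : ℝ) (k : ℕ) (hD1 : 1 ≤ D) (hB1 : 1 ≤ B)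
    (hBN2 : B ≤ N2) (h2dN2 : 2 * D ≤ N2) (hABN2 : (B + 2 * D) * B ≤ N2)
    (hk2' : N2 < B * ((k : ℝ) + 1)) :
    D / (B + 2 * D) ≤ 1 - (1 - 2 * D / N2) ^ k := by
  have hApos : (0:ℝ) < B + 2 * D := by linarith
  have hN2pos : (0:ℝ) < N2 := by linarith
  have hQ0 : 0 ≤ 2 * D / N2 := by positivity
  have hQ1 : 2 * D / N2 ≤ 1 := by rw [div_le_one hN2pos]; linarith
  have hK0 : (0:ℝ) ≤ (k:ℝ) := Nat.cast_nonneg k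
  have hN2Q : N2 * (2 * D / N2) = 2 * D := by field_simp
  have hf1 : 2 * D * N2 - 2 * D * B ≤ B * N2 * ((k:ℝ) * (2 * D / N2)) := by
    have e : B * N2 * ((k:ℝ) * (2 * D / N2)) = 2 * D * B * (k:ℝ) := by
      field_simp
    rw [e]; nlinarith
  have hX0 : (0:ℝ) ≤ (k:ℝ) * (2 * D / N2) := mul_nonneg hK0 hQ0
  have hphalf : D / (B + 2 * D) ≤ 1 / 2 := by
    rw [div_le_div_iff₀ hApos (by norm_num)]; linarith
  set X : ℝ := (k:ℝ) * (2 * D / N2) with hX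
  by_cases hXle : X ≤ 1
  · have hpow := pow_quad hQ0 hQ1 k
    rw [← hX] at hpow
    have h5 := caseA D B N2 X hD1 hB1 hBN2 hABN2 hf1 hX0 hXle
    linarith
  · push_neg at hXle
    have hP0 : (0:ℝ) ≤ (1 - 2 * D / N2) ^ k := pow_nonneg (by linarith) k
    have hbern : 1 + X ≤ (1 + 2 * D / N2) ^ k := by
      have := one_add_mul_le_pow (show (-2:ℝ) ≤ 2 * D / N2 by linarith) k
      rw [hX]; linarith
    have hprod : (1 - 2 * D / N2) ^ k * (1 + 2 * D / N2) ^ k ≤ 1 := by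
      rw [← mul_pow]
      have e : (1 - 2 * D / N2) * (1 + 2 * D / N2) = 1 - (2 * D / N2) ^ 2 := by ring
      rw [e]
      apply pow_le_one₀ <;> nlinarith
    have hhalf : (1 - 2 * D / N2) ^ k ≤ 1 / 2 := by
      nlinarith [mul_le_mul_of_nonneg_left hbern hP0]
    linarith

lemma crux (n d βn k : ℕ) (hd : 1 ≤ d) (hβ : 1 ≤ βn) (hαn : βn + 2 * d ≤ n) (hn : 2 ≤ n)
    (hk2 : n ^ 2 < βn * (k + 1)) :
    (d : ℝ) / ((βn : ℝ) + 2 * d) ≤ 1 - (1 - 2 * (d : ℝ) / (n : ℝ) ^ 2) ^ k := by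
  apply crux_real
  · exact_mod_cast hd
  · exact_mod_cast hβ
  · have h1 : βn ≤ n ^ 2 := by nlinarith
    exact_mod_cast h1
  · have h1 : 2 * d ≤ n ^ 2 := by nlinarith
    have h2 : ((2 * d : ℕ) : ℝ) ≤ ((n ^ 2 : ℕ) : ℝ) := by exact_mod_cast h1
    push_cast at h2; linarith
  · have h1 : (βn + 2 * d) * βn ≤ n ^ 2 := by nlinarith
    have h2 : (((βn + 2 * d) * βn : ℕ) : ℝ) ≤ ((n ^ 2 : ℕ) : ℝ) := by exact_mod_cast h1
    push_cast at h2; linarith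
  · have h2 : ((n ^ 2 : ℕ) : ℝ) < ((βn * (k + 1) : ℕ) : ℝ) := by exact_mod_cast hk2
    push_cast at h2; linarith

/-- Let `d ≤ α ≤ n` be positive integers, `X ~ Binomial(α, d/α)` and
`Z = 2d + Binomial(n², 2d/n²)`.  Then `X` is stochastically dominated by `Z`:
for every `t`, `Pr[X > t] ≤ Pr[Z > t]`. -/
theorem stmt_9 (n d α : ℕ) (hd : 0 < d) (hdα : d ≤ α) (hαn : α ≤ n) :
    ∀ t : ℕ,
      ∑ i ∈ (range (α + 1)).filter (fun i => t < i), binomPMF α ((d : ℝ) / (α : ℝ)) i ≤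
        ∑ i ∈ (range (n ^ 2 + 1)).filter (fun i => t < 2 * d + i),
          binomPMF (n ^ 2) (2 * (d : ℝ) / (n : ℝ) ^ 2) i := by
  intro t
  have hα : 0 < α := lt_of_lt_of_le hd hdα
  by_cases hn1 : n = 1
  · -- degenerate case n = 1, d = α = 1
    subst hn1
    have hd1 : d = 1 := by omega
    have hα1 : α = 1 := by omega
    subst hd1; subst hα1
    norm_num [Finset.sum_filter, Finset.sum_range_succ, binomPMF]
    rcases t with _ | _ | _ | m
    · norm_num
    · norm_num
    · norm_num
    · split_ifs <;> first | exact ‹False›.elim | omega | norm_num | simp_all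
  · have hn2 : 2 ≤ n := by omega
    set p : ℝ := (d : ℝ) / (α : ℝ) with hp
    set q : ℝ := 2 * (d : ℝ) / (n : ℝ) ^ 2 with hq
    have hαR : (0:ℝ) < (α:ℝ) := by exact_mod_cast hα
    have hp0 : 0 ≤ p := by positivity
    have hp1 : p ≤ 1 := by
      rw [hp, div_le_one hαR]; exact_mod_cast hdα
    have h2dn2 : 2 * d ≤ n ^ 2 := by nlinarith
    have hq0 : 0 ≤ q := by positivity
    have hq1 : q ≤ 1 := by
      rw [hq, div_le_one (by positivity)]
      have : ((2 * d : ℕ) : ℝ) ≤ ((n ^ 2 : ℕ) : ℝ) := by exact_mod_cast h2dn2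
      push_cast at this; linarith
    have hLHS : (range (α + 1)).filter (fun i => t < i) = Finset.Icc (t + 1) α := by
      ext x; simp only [Finset.mem_filter, Finset.mem_range, Finset.mem_Icc]; omega
    rw [hLHS]
    by_cases ht : t < 2 * d
    · -- RHS = 1
      have hR : (range (n ^ 2 + 1)).filter (fun i => t < 2 * d + i) = range (n ^ 2 + 1) := by
        apply Finset.filter_true_of_mem; intro i _; omega
      rw [hR, binomPMF_sum]
      calc (∑ i ∈ Finset.Icc (t + 1) α, binomPMF α p i)
          ≤ ∑ i ∈ range (α + 1), binomPMF α p i := by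
            apply Finset.sum_le_sum_of_subset_of_nonneg
            · intro x hx; simp only [Finset.mem_Icc] at hx; simp only [Finset.mem_range]; omega
            · intro i _ _; exact binomPMF_nonneg hp0 hp1 α i
        _ = 1 := binomPMF_sum α p
    · push_neg at ht
      have hRHS : (range (n ^ 2 + 1)).filter (fun i => t < 2 * d + i)
          = Finset.Icc (t - 2 * d + 1) (n ^ 2) := by
        ext x; simp only [Finset.mem_filter, Finset.mem_range, Finset.mem_Icc]; omega
      rw [hRHS]
      show tailB α p (t + 1) ≤ tailB (n ^ 2) q (t - 2 * d + 1)
      by_cases htα : α ≤ t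
      · rw [tailB_empty (by omega)]
        exact tailB_nonneg hq0 hq1 _ _
      · push_neg at htα
        -- now 2d ≤ t < α ≤ n
        set β : ℕ := α - 2 * d with hβdef
        have hβ1 : 1 ≤ β := by omega
        set s : ℕ := t - 2 * d + 1 with hsdef
        set k : ℕ := n ^ 2 / β with hkdef
        have hβpos : 0 < β := hβ1
        have hdm : β * k + n ^ 2 % β = n ^ 2 := by rw [hkdef]; exact Nat.div_add_mod _ _
        have hmod := Nat.mod_lt (n ^ 2) hβpos
        have hk1 : β * k ≤ n ^ 2 := by omega
        have hk2 : n ^ 2 < β * (k + 1) := by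
          have e : β * (k + 1) = β * k + β := by ring
          omega
        have hcrux : p ≤ 1 - (1 - q) ^ k := by
          rw [hp, hq]
          have e : (α : ℝ) = (β : ℝ) + 2 * (d : ℝ) := by
            have : ((α : ℕ) : ℝ) = ((β + 2 * d : ℕ) : ℝ) := by norm_cast; omega
            push_cast at this; linarith
          rw [e]
          exact crux n d β k (by omega) hβ1 (by omega) hn2 hk2
        have hr0 : (0:ℝ) ≤ 1 - (1 - q) ^ k := le_trans hp0 hcrux
        have hr1 : 1 - (1 - q) ^ k ≤ 1 := by
          nlinarith [pow_nonneg (by linarith : (0:ℝ) ≤ 1 - q) k]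
        calc tailB α p (t + 1)
            = tailB (β + 2 * d) p (s + 2 * d) := by
              congr 1 <;> omega
          _ ≤ tailB β p s := tailB_shift' hp0 hp1 β s (2 * d)
          _ ≤ tailB β (1 - (1 - q) ^ k) s := tailB_mono_p hp0 hcrux hr1 β s
          _ ≤ tailB (β * k) q s := tailB_group hq0 hq1 k β s
          _ ≤ tailB (n ^ 2) q s := tailB_mono_N' hq0 hq1 hk1 s
end

section
/- Let n, L, k ∈ ℕ with k ≤ n, ε > 0, and L ≥ k²/ε. If H = {h : [n] → [L]} is a k-wise independent family of hash functions, then the induced family of orderings Π_h (ordering [n] by the pairs (h(i), i) lexicographically) is ε-almost k-wise independent: for every k-element subset S ⊆ [n], the statistical distance between the induced relative order on S and a uniformly random permutation of S is at most ε. -/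
/-!
Only the tuple `y = h ∘ x` matters, and `k`-wise independence makes it uniform on `[L]^k`.
For injective `y` the tie-breaking by `x` is irrelevant, and `y ↦ y ∘ σ` matches the `y` that
induce the order `σ` with the strictly increasing tuples; so conditioned on `y` being injective
the induced order is exactly uniform. The distance to uniform is therefore at most
`Pr[y not injective] ≤ k²/L ≤ ε`, by a union bound over the pairs of coordinates.
-/

open Finset Function Fintype

lemma sum_mul_comp_eq_mul_sum {α β : Type*} [Fintype α] [Fintype β] [DecidableEq β]
    (w : α → ℝ) (π : α → β) (c : ℝ)
    (hfiber : ∀ b, ∑ a, w a * (if π a = b then 1 else 0) = c) (g : β → ℝ) :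
    ∑ a, w a * g (π a) = c * ∑ b, g b := by
  calc ∑ a, w a * g (π a) = ∑ a, ∑ b, (w a * if π a = b then 1 else 0) * g b := by simp
    _ = ∑ b, (∑ a, w a * if π a = b then 1 else 0) * g b := by
      rw [Finset.sum_comm]; simp only [Finset.sum_mul]
    _ = c * ∑ b, g b := by simp only [hfiber, Finset.mul_sum]

lemma abs_div_sub_div_le_of_le {t K m e b : ℝ} (hK : 0 < K) (ht : 0 ≤ t) (htK : t ≤ K)
    (he : 0 ≤ e) (heb : e ≤ b) (hN : 0 < K * m + b) :
    |(t * m + e) / (K * m + b) - t / K| ≤ b / (K * m + b) := by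
  have hNK := mul_pos hN hK
  rw [div_sub_div _ _ hN.ne' hK.ne', abs_div, abs_of_pos hNK, ← mul_div_mul_right b _ hK.ne',
    div_le_div_iff_of_pos_right hNK, abs_le]
  constructor <;> nlinarith

lemma injective_and_sort_eq_iff_strictMono {α β : Type*} [LinearOrder α] [LinearOrder β] {k : ℕ}
    (y : Fin k → α) (x : Fin k → β) (σ : Equiv.Perm (Fin k)) :
    (Injective y ∧ Tuple.sort (fun i => toLex (y i, x i)) = σ) ↔ StrictMono (y ∘ σ) := by
  constructor
  · rintro ⟨hy, rfl⟩
    have := Prod.Lex.monotone_fst_ofLex.comp (Tuple.monotone_sort fun i => toLex (y i, x i))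
    exact this.strictMono_of_injective (hy.comp (Equiv.injective _))
  · intro hyσ
    have hy : Injective y := by
      simpa [Function.comp_assoc] using hyσ.injective.comp σ.symm.injective
    have hkey : StrictMono fun i => toLex (y (σ i), x (σ i)) := fun i j hij =>
      Prod.Lex.toLex_lt_toLex.2 (Or.inl (hyσ hij))
    refine ⟨hy, (Tuple.eq_sort_iff.2 ⟨hkey.monotone, fun i j hij heq => ?_⟩).symm⟩
    exact absurd (hy (congrArg (fun z => (ofLex z).1) heq)) (σ.injective.ne hij.ne)

lemma card_injective_and_sort_eq {α β : Type*} [LinearOrder α] [LinearOrder β] [Fintype α]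
    {k : ℕ} (x : Fin k → β) (σ : Equiv.Perm (Fin k)) :
    #{y : Fin k → α | Injective y ∧ Tuple.sort (fun i => toLex (y i, x i)) = σ} =
      #{z : Fin k → α | StrictMono z} := by
  refine card_nbij' (· ∘ σ) (· ∘ σ.symm) (fun y hy => ?_) (fun z hz => ?_) (fun y _ => ?_)
    (fun z _ => ?_)
  · simp only [coe_filter, mem_univ, true_and, Set.mem_ofPred_eq] at hy ⊢
    exact (injective_and_sort_eq_iff_strictMono y x σ).1 hy
  · simp only [coe_filter, mem_univ, true_and, Set.mem_ofPred_eq] at hz ⊢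
    exact (injective_and_sort_eq_iff_strictMono _ x σ).2 (by simpa [comp_assoc] using hz)
  · simp [comp_assoc]
  · simp [comp_assoc]

section Conditioning

variable {Ω P : Type*} [Fintype Ω] [DecidableEq P] (s : Ω → P) (good : Ω → Prop)
  [DecidablePred good] {m : ℕ}

lemma card_filter_and_mem_eq (hfiber : ∀ p, #{ω | good ω ∧ s ω = p} = m) (T : Finset P) :
    #{ω | good ω ∧ s ω ∈ T} = #T * m := by
  rw [card_eq_sum_card_fiberwise (f := s) (t := T) fun ω hω => (mem_filter.1 hω).2.2,
    sum_const_nat fun p hp => ?_]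
  rw [filter_filter, ← hfiber p]
  congr 1
  exact filter_congr fun ω _ => ⟨fun h => ⟨h.1.1, h.2⟩, fun h => ⟨⟨h.1, h.2 ▸ hp⟩, h.2⟩⟩

lemma abs_card_filter_mem_div_sub_le [Fintype P] [Nonempty Ω]
    (hfiber : ∀ p, #{ω | good ω ∧ s ω = p} = m) (T : Finset P) :
    |(#{ω | s ω ∈ T} : ℝ) / card Ω - #T / card P| ≤ #{ω | ¬ good ω} / card Ω := by
  have hgood : #{ω | good ω} = card P * m := by
    simpa using card_filter_and_mem_eq s good hfiber univ
  have hΩ : card Ω = card P * m + #{ω | ¬ good ω} := by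
    rw [← hgood, card_filter_add_card_filter_not, card_univ]
  have hT : #{ω | s ω ∈ T} = #T * m + #{ω | s ω ∈ T ∧ ¬ good ω} := by
    rw [← card_filter_and_mem_eq s good hfiber T,
      ← card_filter_add_card_filter_not (s := {ω | s ω ∈ T}) good, filter_filter, filter_filter]
    simp only [and_comm]
  have hbad : #{ω | s ω ∈ T ∧ ¬ good ω} ≤ #{ω | ¬ good ω} :=
    card_le_card fun ω hω => by simp_all
  have hP : 0 < card P := card_pos_iff.2 ⟨s (Classical.arbitrary Ω)⟩
  have hΩpos : (0 : ℝ) < card P * m + #{ω | ¬ good ω} := by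
    exact_mod_cast hΩ ▸ Fintype.card_pos
  rw [hT, hΩ]
  push_cast
  exact abs_div_sub_div_le_of_le (by exact_mod_cast hP) (by positivity)
    (by exact_mod_cast card_le_univ T) (by positivity) (by exact_mod_cast hbad) hΩpos

end Conditioning

section Collisions

variable {ι α : Type*} [Fintype ι] [DecidableEq ι] [Fintype α] [DecidableEq α]

lemma card_filter_apply_eq_apply_le {i j : ι} (hij : i ≠ j) :
    #{y : ι → α | y i = y j} ≤ card α ^ (card ι - 1) := by
  calc #{y : ι → α | y i = y j}
      ≤ card ({m : ι // m ≠ i} → α) := by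
        refine card_le_card_of_injOn (fun y m => y m) (fun _ _ => mem_univ _) ?_
        intro y₁ h₁ y₂ h₂ heq
        simp only [coe_filter, mem_univ, true_and, Set.mem_ofPred_eq] at h₁ h₂
        funext m
        by_cases hm : m = i
        · subst hm
          rw [h₁, h₂]
          exact congrFun heq ⟨j, hij.symm⟩
        · exact congrFun heq ⟨m, hm⟩
    _ = card α ^ (card ι - 1) := by simp [Fintype.card_subtype_compl]

lemma card_filter_not_injective_le :
    #{y : ι → α | ¬ Injective y} ≤ card ι ^ 2 * card α ^ (card ι - 1) := by
  have hcover : ({y : ι → α | ¬ Injective y} : Finset _) ⊆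
      (univ : Finset ι).offDiag.biUnion fun p => {y : ι → α | y p.1 = y p.2} := by
    intro y hy
    simp only [mem_filter, mem_univ, true_and, Injective, not_forall] at hy
    obtain ⟨a, b, hab, hne⟩ := hy
    exact mem_biUnion.2 ⟨(a, b), mem_offDiag.2 ⟨mem_univ _, mem_univ _, hne⟩, by simp [hab]⟩
  calc #{y : ι → α | ¬ Injective y}
      ≤ ∑ p ∈ (univ : Finset ι).offDiag, #{y : ι → α | y p.1 = y p.2} :=
        (card_le_card hcover).trans card_biUnion_le
    _ ≤ ∑ _p ∈ (univ : Finset ι).offDiag, card α ^ (card ι - 1) :=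
        sum_le_sum fun p hp => card_filter_apply_eq_apply_le (mem_offDiag.1 hp).2.2
    _ ≤ card ι ^ 2 * card α ^ (card ι - 1) := by
        rw [sum_const, smul_eq_mul, offDiag_card, card_univ, sq]
        exact Nat.mul_le_mul_right _ (Nat.sub_le _ _)

lemma card_filter_not_injective_div_le :
    (#{y : ι → α | ¬ Injective y} : ℝ) / card α ^ card ι ≤ (card ι : ℝ) ^ 2 / card α := by
  rcases Nat.eq_zero_or_pos (card ι) with hι | hι
  · have : IsEmpty ι := card_eq_zero_iff.1 hι
    simp [injective_of_subsingleton]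
  rcases Nat.eq_zero_or_pos (card α) with hα | hα
  · simp [hα, hι.ne']
  rw [div_le_div_iff₀ (by positivity) (by positivity)]
  calc (#{y : ι → α | ¬ Injective y} : ℝ) * card α
      ≤ (card ι ^ 2 * card α ^ (card ι - 1) : ℕ) * card α := by
        gcongr; exact card_filter_not_injective_le
    _ = card ι ^ 2 * card α ^ card ι := by
        push_cast
        rw [mul_assoc, ← pow_succ, Nat.sub_add_cancel hι]

end Collisions

theorem stmt_19_general (n L k : ℕ) (ε : ℝ) (hε : 0 < ε)
    (hL : (k : ℝ) ^ 2 / ε ≤ (L : ℝ))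
    (H : PMF (Fin n → Fin L))
    (hkwise : ∀ x : Fin k → Fin n, Function.Injective x → ∀ y : Fin k → Fin L,
      (∑ f : Fin n → Fin L, (H f).toReal * (if ∀ i, f (x i) = y i then 1 else 0)) =
        1 / (L : ℝ) ^ k) :
    ∀ x : Fin k → Fin n, Function.Injective x →
      ∀ T : Finset (Equiv.Perm (Fin k)),
        |(∑ f : Fin n → Fin L, (H f).toReal *
            (if Tuple.sort (fun i => toLex (f (x i), x i)) ∈ T then 1 else 0)) -
          (T.card : ℝ) / (Nat.factorial k : ℝ)| ≤ ε := by
  intro x hx T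
  have : Nonempty (Fin k → Fin L) := by
    rcases k.eq_zero_or_pos with rfl | hk0
    · exact ⟨Fin.elim0⟩
    · have hL0 : (0 : ℝ) < L := (div_pos (by positivity) hε).trans_le hL
      exact ⟨fun _ => ⟨0, by exact_mod_cast hL0⟩⟩
  have hmarginal := sum_mul_comp_eq_mul_sum (fun f => (H f).toReal) (fun f i => f (x i))
    (1 / (L : ℝ) ^ k) (fun y => by simpa only [funext_iff] using hkwise x hx y)
    (fun y => if Tuple.sort (fun i => toLex (y i, x i)) ∈ T then 1 else 0)
  calc _ = |(#{y : Fin k → Fin L | Tuple.sort (fun i => toLex (y i, x i)) ∈ T} : ℝ) /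
          card (Fin k → Fin L) - #T / card (Equiv.Perm (Fin k))| := by
        rw [hmarginal, sum_boole]
        simp [div_eq_inv_mul, Fintype.card_perm]
    _ ≤ #{y : Fin k → Fin L | ¬ Injective y} / card (Fin k → Fin L) :=
        abs_card_filter_mem_div_sub_le _ _ (card_injective_and_sort_eq x) T
    _ ≤ (k : ℝ) ^ 2 / L := by
        simpa using card_filter_not_injective_div_le (ι := Fin k) (α := Fin L)
    _ ≤ ε := by
        rcases (Nat.cast_nonneg L : (0 : ℝ) ≤ L).eq_or_lt with hL0 | hL0
        · simp [← hL0, hε.le]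
        · rw [div_le_iff₀ hL0]
          rwa [div_le_iff₀ hε, mul_comm] at hL

/-- Let `k ≤ n`, `ε > 0` and `L ≥ k²/ε`.  If the family (distribution) `H` of hash
functions `h : [n] → [L]` is `k`-wise independent, then the induced family of orderings
`Π_h` (ordering `[n]` by the pairs `(h(i), i)` lexicographically) is `ε`-almost `k`-wise
independent: for every `k`-element subset (given by an injective `x : Fin k → [n]`), the
statistical distance between the induced relative order on the subset (the sorting
permutation of the keys `(h(x i), x i)`) and a uniformly random permutation is at
most `ε`. -/
theorem stmt_19 (n L k : ℕ) (hk : k ≤ n) (ε : ℝ) (hε : 0 < ε)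
    (hL : (k : ℝ) ^ 2 / ε ≤ (L : ℝ))
    (H : PMF (Fin n → Fin L))
    (hkwise : ∀ x : Fin k → Fin n, Function.Injective x → ∀ y : Fin k → Fin L,
      (∑ f : Fin n → Fin L, (H f).toReal * (if ∀ i, f (x i) = y i then 1 else 0)) =
        1 / (L : ℝ) ^ k) :
    ∀ x : Fin k → Fin n, Function.Injective x →
      ∀ T : Finset (Equiv.Perm (Fin k)),
        |(∑ f : Fin n → Fin L, (H f).toReal *
            (if Tuple.sort (fun i => toLex (f (x i), x i)) ∈ T then 1 else 0)) -
          (T.card : ℝ) / (Nat.factorial k : ℝ)| ≤ ε :=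
  stmt_19_general n L k ε hε hL H hkwise
end
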